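/- arXiv:1801.03655 — 2 statements merged into one kernel-verified Lean document; each statement's English description precedes it below -/
import Mathlib

section
/- For any discrete memoryless multiple access channel and every positive integer n, the function σ_n is concave on ℝ_{≥0}; that is, for all a, b ≥ 0 and λ ∈ [0,1], σ_n((1−λ)a + λb) ≥ (1−λ)σ_n(a) + λσ_n(b). -/
open scoped BigOperators

noncomputable section

/-- Shannon entropy (base 2) of a (sub)probability mass function on a finite type. -/
def ent2 {α : Type} [Fintype α] (p : α → ℝ) : ℝ :=
  -∑ a, p a * Real.logb 2 (p a)

/-- Conditional mutual information `I(A;B|U)` (in bits) of the joint pmf `p` on `U × A × B`,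
given in curried form, computed as `H(A|U) + H(B|U) - H(A,B|U)`. -/
def condMI {U A B : Type} [Fintype U] [Fintype A] [Fintype B]
    (p : U → A → B → ℝ) : ℝ :=
  ent2 (fun ua : U × A => ∑ b, p ua.1 ua.2 b)
    + ent2 (fun ub : U × B => ∑ a, p ub.1 a ub.2)
    - ent2 (fun uab : U × A × B => p uab.1 uab.2.1 uab.2.2)
    - ent2 (fun u : U => ∑ a, ∑ b, p u a b)

/-- `p` is a joint pmf on `U × A × B` (curried form). -/
def IsPMF3 {U A B : Type} [Fintype U] [Fintype A] [Fintype B] (p : U → A → B → ℝ) : Prop :=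
  (∀ u a b, 0 ≤ p u a b) ∧ ∑ u, ∑ a, ∑ b, p u a b = 1

/-- A discrete memoryless multiple access channel with input alphabets `X1, X2` and
output alphabet `Y`. -/
structure MAC (X1 X2 Y : Type) [Fintype X1] [Fintype X2] [Fintype Y] where
  W : X1 → X2 → Y → ℝ
  nonneg : ∀ x1 x2 y, 0 ≤ W x1 x2 y
  sum_one : ∀ x1 x2, ∑ y, W x1 x2 y = 1

variable {X1 X2 Y : Type} [Fintype X1] [Fintype X2] [Fintype Y]

/-- The set of values `(1/n) I(X₁ⁿ,X₂ⁿ;Yⁿ|U)` over all finite auxiliary alphabets `U`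
(wlog `U = Fin k`) and all joint pmfs `p(u,x₁ⁿ,x₂ⁿ)` with `I(X₁ⁿ;X₂ⁿ|U) ≤ nδ`,
where `Yⁿ` is the output of the `n`-th extension of the MAC `M`. -/
def sigmaSet (M : MAC X1 X2 Y) (n : ℕ) (δ : ℝ) : Set ℝ :=
  {r | ∃ (k : ℕ) (p : Fin k → (Fin n → X1) → (Fin n → X2) → ℝ),
    IsPMF3 p ∧ condMI p ≤ (n : ℝ) * δ ∧
    r = (1 / (n : ℝ)) *
      condMI (fun (u : Fin k) (x : (Fin n → X1) × (Fin n → X2)) (y : Fin n → Y) =>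
        p u x.1 x.2 * ∏ t, M.W (x.1 t) (x.2 t) (y t)) }

/-- `σ_n(δ)`. -/
def sigmaN (M : MAC X1 X2 Y) (n : ℕ) (δ : ℝ) : ℝ := sSup (sigmaSet M n δ)

/-- `σ(δ) = lim_n σ_n(δ) = sup_n σ_n(δ)`. -/
def sigmaF (M : MAC X1 X2 Y) (δ : ℝ) : ℝ := ⨆ n : ℕ, sigmaN M (n + 1) δ

/-- `⌊2^{nR}⌋`, the size of a message (or link) index set. -/
def msgSize (n : ℕ) (R : ℝ) : ℕ := ⌊(2 : ℝ) ^ ((n : ℝ) * R)⌋₊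

/-- A `(2^{nR₁}, 2^{nR₂}, n)`-code for the MAC `M` with a
`((c1,c2),(d1,d2))`-cooperation facilitator. -/
structure Code (M : MAC X1 X2 Y) (n : ℕ) (R1 R2 c1 c2 d1 d2 : ℝ) where
  /-- encoder 1 to CF -/
  toCF1 : Fin (msgSize n R1) → Fin (msgSize n c1)
  /-- encoder 2 to CF -/
  toCF2 : Fin (msgSize n R2) → Fin (msgSize n c2)
  /-- CF to encoder 1 -/
  cf1 : Fin (msgSize n c1) → Fin (msgSize n c2) → Fin (msgSize n d1)
  /-- CF to encoder 2 -/
  cf2 : Fin (msgSize n c1) → Fin (msgSize n c2) → Fin (msgSize n d2)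
  /-- encoder 1 -/
  f1 : Fin (msgSize n R1) → Fin (msgSize n d1) → Fin n → X1
  /-- encoder 2 -/
  f2 : Fin (msgSize n R2) → Fin (msgSize n d2) → Fin n → X2
  /-- decoder -/
  dec : (Fin n → Y) → Fin (msgSize n R1) × Fin (msgSize n R2)

/-- The error probability `λ_n(w₁,w₂)` of the code `C` on the message pair `(w₁,w₂)`. -/
def errProb {M : MAC X1 X2 Y} {n : ℕ} {R1 R2 c1 c2 d1 d2 : ℝ}
    (C : Code M n R1 R2 c1 c2 d1 d2)
    (w1 : Fin (msgSize n R1)) (w2 : Fin (msgSize n R2)) : ℝ :=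
  ∑ y : Fin n → Y,
    if C.dec y ≠ (w1, w2) then
      ∏ t, M.W (C.f1 w1 (C.cf1 (C.toCF1 w1) (C.toCF2 w2)) t)
               (C.f2 w2 (C.cf2 (C.toCF1 w1) (C.toCF2 w2)) t) (y t)
    else 0

/-- Average error probability of a code. -/
def avgErr {M : MAC X1 X2 Y} {n : ℕ} {R1 R2 c1 c2 d1 d2 : ℝ}
    (C : Code M n R1 R2 c1 c2 d1 d2) : ℝ :=
  (1 / (2 : ℝ) ^ ((n : ℝ) * (R1 + R2))) * ∑ w1, ∑ w2, errProb C w1 w2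

/-- Maximal error probability of a code. -/
def maxErr {M : MAC X1 X2 Y} {n : ℕ} {R1 R2 c1 c2 d1 d2 : ℝ}
    (C : Code M n R1 R2 c1 c2 d1 d2) : ℝ :=
  sSup {e | ∃ w1 w2, e = errProb C w1 w2}

/-- `(R₁,R₂)` is achievable under the average-error criterion for the MAC `M` with a
`((c1,c2),(d1,d2))`-CF. -/
def AchievableAvg (M : MAC X1 X2 Y) (c1 c2 d1 d2 : ℝ) (R : ℝ × ℝ) : Prop :=
  0 ≤ R.1 ∧ 0 ≤ R.2 ∧
  ∃ C : (n : ℕ) → Code M (n + 1) R.1 R.2 c1 c2 d1 d2,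
    Filter.Tendsto (fun n => avgErr (C n)) Filter.atTop (nhds 0)

/-- `(R₁,R₂)` is achievable under the maximal-error criterion. -/
def AchievableMax (M : MAC X1 X2 Y) (c1 c2 d1 d2 : ℝ) (R : ℝ × ℝ) : Prop :=
  0 ≤ R.1 ∧ 0 ≤ R.2 ∧
  ∃ C : (n : ℕ) → Code M (n + 1) R.1 R.2 c1 c2 d1 d2,
    Filter.Tendsto (fun n => maxErr (C n)) Filter.atTop (nhds 0)

/-- Average-error sum-capacity `C_sum,avg(C_in, C_out)`. -/
def CsumAvg (M : MAC X1 X2 Y) (Cin Cout : ℝ × ℝ) : ℝ :=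
  sSup {s | ∃ R ∈ closure {R : ℝ × ℝ | AchievableAvg M Cin.1 Cin.2 Cout.1 Cout.2 R},
    s = R.1 + R.2}

/-- Maximal-error sum-capacity `C_sum,max(C_in, C_out)`. -/
def CsumMax (M : MAC X1 X2 Y) (Cin Cout : ℝ × ℝ) : ℝ :=
  sSup {s | ∃ R ∈ closure {R : ℝ × ℝ | AchievableMax M Cin.1 Cin.2 Cout.1 Cout.2 R},
    s = R.1 + R.2}

/-- `max_{p(x₁,x₂)} I(X₁,X₂;Y)`, used to specify when CF input links are large enough
that the CF has full knowledge of both messages. -/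
def maxMI (M : MAC X1 X2 Y) : ℝ :=
  sSup {r | ∃ p : X1 × X2 → ℝ, (∀ x, 0 ≤ p x) ∧ (∑ x, p x = 1) ∧
    r = condMI (fun (_ : Unit) (x : X1 × X2) (y : Y) => p x * M.W x.1 x.2 y)}

end

noncomputable section SigmaAux

/-- `φ x = -(x * log₂ x)`, the bit-entropy summand. -/
def phiE (x : ℝ) : ℝ := -(x * Real.logb 2 x)

lemma phiE_eq (x : ℝ) : phiE x = Real.negMulLog x / Real.log 2 := by
  simp [phiE, Real.negMulLog, Real.logb]
  ring

@[simp] lemma phiE_zero : phiE 0 = 0 := by simp [phiE]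
@[simp] lemma phiE_one : phiE 1 = 0 := by simp [phiE]

lemma phiE_mul (c x : ℝ) : phiE (c * x) = c * phiE x + x * phiE c := by
  rw [phiE_eq, phiE_eq, phiE_eq, Real.negMulLog_mul]
  ring

lemma phiE_add_le {x y : ℝ} (hx : 0 ≤ x) (hy : 0 ≤ y) : phiE (x + y) ≤ phiE x + phiE y := by
  have key : ∀ {u v : ℝ}, 0 ≤ u → 0 ≤ v → -(u * Real.logb 2 (u + v)) ≤ -(u * Real.logb 2 u) := by
    intro u v hu hv
    rcases hu.eq_or_lt with h | h
    · simp [← h]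
    · have : Real.logb 2 u ≤ Real.logb 2 (u + v) :=
        Real.logb_le_logb_of_le (by norm_num) h (by linarith)
      nlinarith
  have h1 := key hx hy
  have h2 := key hy hx
  rw [add_comm y x] at h2
  have : phiE (x + y) = -(x * Real.logb 2 (x + y)) + -(y * Real.logb 2 (x + y)) := by
    simp [phiE]; ring
  rw [this]
  exact add_le_add h1 h2

lemma phiE_sum_le {α : Type*} (s : Finset α) (f : α → ℝ) (h : ∀ a ∈ s, 0 ≤ f a) :
    phiE (∑ a ∈ s, f a) ≤ ∑ a ∈ s, phiE (f a) := by
  induction s using Finset.cons_induction with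
  | empty => simp
  | cons a s ha ih =>
    rw [Finset.sum_cons, Finset.sum_cons]
    have h1 : phiE (f a + ∑ x ∈ s, f x) ≤ phiE (f a) + phiE (∑ x ∈ s, f x) :=
      phiE_add_le (h a (Finset.mem_cons_self a s))
        (Finset.sum_nonneg fun x hx => h x (Finset.mem_cons_of_mem hx))
    exact h1.trans (by
      have := ih (fun x hx => h x (Finset.mem_cons_of_mem hx))
      linarith)

/-- Gibbs-type bound: grouped entropy bound, natural-log version. -/
lemma sum_negMulLog_le {α : Type*} [Fintype α] (q : α → ℝ) (h : ∀ a, 0 ≤ q a) :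
    ∑ a, Real.negMulLog (q a) ≤
      Real.negMulLog (∑ a, q a) + (∑ a, q a) * Real.log (Fintype.card α) := by
  set s := ∑ a, q a with hs
  have hs0 : 0 ≤ s := Finset.sum_nonneg fun a _ => h a
  rcases hs0.eq_or_lt with h0 | h0
  · have : ∀ a ∈ Finset.univ, q a = 0 :=
      (Finset.sum_eq_zero_iff_of_nonneg (fun a _ => h a)).1 h0.symm
    have : ∀ a : α, q a = 0 := fun a => this a (Finset.mem_univ a)
    simp [this, ← h0]
  · -- s > 0, so α is nonempty
    have hcard : 0 < Fintype.card α := by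
      by_contra hc
      have : Fintype.card α = 0 := by omega
      have : IsEmpty α := Fintype.card_eq_zero_iff.mp this
      rw [hs] at h0; simp at h0
    set N : ℝ := (Fintype.card α : ℝ) with hN
    have hN0 : 0 < N := by rw [hN]; exact_mod_cast hcard
    have key : ∀ a : α, Real.negMulLog (q a) ≤
        -(q a * Real.log s) + q a * Real.log N + (s / N - q a) := by
      intro a
      rcases (h a).eq_or_lt with hq | hq
      · simp [← hq, Real.negMulLog]
        positivity
      · have hpos : 0 < s / (N * q a) := by positivity
        have h1 : Real.log (s / (N * q a)) ≤ s / (N * q a) - 1 :=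
          Real.log_le_sub_one_of_pos hpos
        have h2 : Real.log (s / (N * q a)) = Real.log s - Real.log N - Real.log (q a) := by
          rw [Real.log_div (by positivity) (by positivity), Real.log_mul (by positivity) hq.ne']
          ring
        have h3 : q a * Real.log (s / (N * q a)) ≤ q a * (s / (N * q a) - 1) :=
          mul_le_mul_of_nonneg_left h1 (h a)
        have h4 : q a * (s / (N * q a)) = s / N := by
          field_simp
        rw [h2] at h3
        simp [Real.negMulLog]
        nlinarith [h3, h4]
    have hsum := Finset.sum_le_sum (fun a (_ : a ∈ Finset.univ) => key a)
    have hrhs : ∑ a, (-(q a * Real.log s) + q a * Real.log N + (s / N - q a))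
        = -(s * Real.log s) + s * Real.log N := by
      rw [Finset.sum_add_distrib, Finset.sum_add_distrib]
      have e1 : ∑ x : α, -(q x * Real.log s) = -(s * Real.log s) := by
        rw [Finset.sum_neg_distrib, ← Finset.sum_mul, ← hs]
      have e2 : ∑ x : α, q x * Real.log N = s * Real.log N := by
        rw [← Finset.sum_mul]
      have e3 : ∑ _x : α, s / N = s := by
        rw [Finset.sum_const, Finset.card_univ, nsmul_eq_mul, ← hN]
        field_simp
      rw [e1, e2, Finset.sum_sub_distrib, e3, ← hs]
      ring
    rw [hrhs] at hsum
    simpa [Real.negMulLog] using hsum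

lemma sum_phiE_le {α : Type*} [Fintype α] (q : α → ℝ) (h : ∀ a, 0 ≤ q a) :
    ∑ a, phiE (q a) ≤ phiE (∑ a, q a) + (∑ a, q a) * Real.logb 2 (Fintype.card α) := by
  have h2 : (0:ℝ) < Real.log 2 := Real.log_pos (by norm_num)
  have := sum_negMulLog_le q h
  have hdiv : (∑ a, Real.negMulLog (q a)) / Real.log 2 ≤
      (Real.negMulLog (∑ a, q a) + (∑ a, q a) * Real.log (Fintype.card α)) / Real.log 2 := by
    gcongr
  calc ∑ a, phiE (q a) = (∑ a, Real.negMulLog (q a)) / Real.log 2 := by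
        rw [Finset.sum_div]; exact Finset.sum_congr rfl fun a _ => phiE_eq _
    _ ≤ _ := hdiv
    _ = phiE (∑ a, q a) + (∑ a, q a) * Real.logb 2 (Fintype.card α) := by
        rw [phiE_eq, Real.logb]; ring

end SigmaAux


noncomputable section SigmaAux2

lemma ent2_eq_sum_phiE {α : Type} [Fintype α] (p : α → ℝ) : ent2 p = ∑ a, phiE (p a) := by
  rw [ent2, ← Finset.sum_neg_distrib]
  exact Finset.sum_congr rfl fun a _ => rfl

lemma condMI_eq {U A B : Type} [Fintype U] [Fintype A] [Fintype B] (p : U → A → B → ℝ) :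
    condMI p = (∑ u, ∑ a, phiE (∑ b, p u a b)) + (∑ u, ∑ b, phiE (∑ a, p u a b))
      - (∑ u, ∑ a, ∑ b, phiE (p u a b)) - (∑ u, phiE (∑ a, ∑ b, p u a b)) := by
  simp only [condMI, ent2_eq_sum_phiE, Fintype.sum_prod_type]

lemma condMI_le_logb {U A B : Type} [Fintype U] [Fintype A] [Fintype B]
    (p : U → A → B → ℝ) (hnn : ∀ u a b, 0 ≤ p u a b)
    (hsum : ∑ u, ∑ a, ∑ b, p u a b = 1) :
    condMI p ≤ Real.logb 2 (Fintype.card A) := by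
  rw [condMI_eq]
  have hUB : (∑ u, ∑ b, phiE (∑ a, p u a b)) ≤ ∑ u, ∑ a, ∑ b, phiE (p u a b) := by
    refine Finset.sum_le_sum fun u _ => ?_
    rw [Finset.sum_comm]
    exact Finset.sum_le_sum fun b _ =>
      phiE_sum_le _ _ (fun a _ => hnn u a b)
  have hUA : (∑ u, ∑ a, phiE (∑ b, p u a b))
      ≤ (∑ u, phiE (∑ a, ∑ b, p u a b)) + Real.logb 2 (Fintype.card A) := by
    have key : ∀ u, ∑ a, phiE (∑ b, p u a b) ≤ phiE (∑ a, ∑ b, p u a b)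
        + (∑ a, ∑ b, p u a b) * Real.logb 2 (Fintype.card A) :=
      fun u => sum_phiE_le _ (fun a => Finset.sum_nonneg fun b _ => hnn u a b)
    calc (∑ u, ∑ a, phiE (∑ b, p u a b))
        ≤ ∑ u, (phiE (∑ a, ∑ b, p u a b)
            + (∑ a, ∑ b, p u a b) * Real.logb 2 (Fintype.card A)) :=
          Finset.sum_le_sum fun u _ => key u
      _ = (∑ u, phiE (∑ a, ∑ b, p u a b))
            + (∑ u, ∑ a, ∑ b, p u a b) * Real.logb 2 (Fintype.card A) := by
          rw [Finset.sum_add_distrib, ← Finset.sum_mul]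
      _ = _ := by rw [hsum]; ring
  linarith

/-- Time-sharing mixture of two auxiliary-variable pmfs with weights `c₁, c₂`. -/
def mixP {k₁ k₂ : ℕ} {A B : Type} (c₁ c₂ : ℝ)
    (p : Fin k₁ → A → B → ℝ) (q : Fin k₂ → A → B → ℝ) :
    Fin (k₁ + k₂) → A → B → ℝ :=
  fun u a b => Fin.addCases (motive := fun _ => ℝ)
    (fun i => c₁ * p i a b) (fun j => c₂ * q j a b) u

@[simp] lemma mixP_left {k₁ k₂ : ℕ} {A B : Type} (c₁ c₂ : ℝ)
    (p : Fin k₁ → A → B → ℝ) (q : Fin k₂ → A → B → ℝ) (i : Fin k₁) (a : A) (b : B) :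
    mixP c₁ c₂ p q (Fin.castAdd k₂ i) a b = c₁ * p i a b := by
  simp [mixP]

@[simp] lemma mixP_right {k₁ k₂ : ℕ} {A B : Type} (c₁ c₂ : ℝ)
    (p : Fin k₁ → A → B → ℝ) (q : Fin k₂ → A → B → ℝ) (j : Fin k₂) (a : A) (b : B) :
    mixP c₁ c₂ p q (Fin.natAdd k₁ j) a b = c₂ * q j a b := by
  simp [mixP]

lemma sum_phiE_mix1 {k₁ k₂ : ℕ} (c₁ c₂ : ℝ)
    (g : Fin (k₁ + k₂) → ℝ) (g₁ : Fin k₁ → ℝ) (g₂ : Fin k₂ → ℝ)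
    (hL : ∀ i, g (Fin.castAdd k₂ i) = c₁ * g₁ i)
    (hR : ∀ j, g (Fin.natAdd k₁ j) = c₂ * g₂ j)
    (h₁ : ∑ i, g₁ i = 1) (h₂ : ∑ j, g₂ j = 1) :
    ∑ u, phiE (g u)
      = c₁ * (∑ i, phiE (g₁ i)) + c₂ * (∑ j, phiE (g₂ j)) + phiE c₁ + phiE c₂ := by
  rw [Fin.sum_univ_add]
  simp only [hL, hR, phiE_mul]
  simp only [Finset.sum_add_distrib, ← Finset.mul_sum, ← Finset.sum_mul]
  rw [h₁, h₂]; ring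

lemma sum_phiE_mix2 {k₁ k₂ : ℕ} {γ : Type} [Fintype γ] (c₁ c₂ : ℝ)
    (g : Fin (k₁ + k₂) → γ → ℝ) (g₁ : Fin k₁ → γ → ℝ) (g₂ : Fin k₂ → γ → ℝ)
    (hL : ∀ i c, g (Fin.castAdd k₂ i) c = c₁ * g₁ i c)
    (hR : ∀ j c, g (Fin.natAdd k₁ j) c = c₂ * g₂ j c)
    (h₁ : ∑ i, ∑ c, g₁ i c = 1) (h₂ : ∑ j, ∑ c, g₂ j c = 1) :
    ∑ u, ∑ c, phiE (g u c)
      = c₁ * (∑ i, ∑ c, phiE (g₁ i c)) + c₂ * (∑ j, ∑ c, phiE (g₂ j c))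
        + phiE c₁ + phiE c₂ := by
  rw [Fin.sum_univ_add]
  simp only [hL, hR, phiE_mul]
  simp only [Finset.sum_add_distrib, ← Finset.mul_sum, ← Finset.sum_mul]
  rw [h₁, h₂]; ring

lemma sum_phiE_mix3 {k₁ k₂ : ℕ} {γ δ : Type} [Fintype γ] [Fintype δ] (c₁ c₂ : ℝ)
    (g : Fin (k₁ + k₂) → γ → δ → ℝ) (g₁ : Fin k₁ → γ → δ → ℝ) (g₂ : Fin k₂ → γ → δ → ℝ)
    (hL : ∀ i c d, g (Fin.castAdd k₂ i) c d = c₁ * g₁ i c d)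
    (hR : ∀ j c d, g (Fin.natAdd k₁ j) c d = c₂ * g₂ j c d)
    (h₁ : ∑ i, ∑ c, ∑ d, g₁ i c d = 1) (h₂ : ∑ j, ∑ c, ∑ d, g₂ j c d = 1) :
    ∑ u, ∑ c, ∑ d, phiE (g u c d)
      = c₁ * (∑ i, ∑ c, ∑ d, phiE (g₁ i c d)) + c₂ * (∑ j, ∑ c, ∑ d, phiE (g₂ j c d))
        + phiE c₁ + phiE c₂ := by
  rw [Fin.sum_univ_add]
  simp only [hL, hR, phiE_mul]
  simp only [Finset.sum_add_distrib, ← Finset.mul_sum, ← Finset.sum_mul]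
  rw [h₁, h₂]; ring

lemma condMI_mixP {k₁ k₂ : ℕ} {A B : Type} [Fintype A] [Fintype B] (c₁ c₂ : ℝ)
    (p : Fin k₁ → A → B → ℝ) (q : Fin k₂ → A → B → ℝ)
    (hp : ∑ u, ∑ a, ∑ b, p u a b = 1) (hq : ∑ u, ∑ a, ∑ b, q u a b = 1) :
    condMI (mixP c₁ c₂ p q) = c₁ * condMI p + c₂ * condMI q := by
  have hpswap : ∑ u, ∑ b, ∑ a, p u a b = 1 := by
    rw [← hp]; exact Finset.sum_congr rfl fun u _ => Finset.sum_comm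
  have hqswap : ∑ u, ∑ b, ∑ a, q u a b = 1 := by
    rw [← hq]; exact Finset.sum_congr rfl fun u _ => Finset.sum_comm
  have T1 : ∑ u, ∑ a, phiE (∑ b, mixP c₁ c₂ p q u a b)
      = c₁ * (∑ i, ∑ a, phiE (∑ b, p i a b)) + c₂ * (∑ j, ∑ a, phiE (∑ b, q j a b))
        + phiE c₁ + phiE c₂ := by
    refine sum_phiE_mix2 c₁ c₂ _ _ _ ?_ ?_ hp hq
    · intro i a; simp [Finset.mul_sum]
    · intro j a; simp [Finset.mul_sum]
  have T2 : ∑ u, ∑ b, phiE (∑ a, mixP c₁ c₂ p q u a b)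
      = c₁ * (∑ i, ∑ b, phiE (∑ a, p i a b)) + c₂ * (∑ j, ∑ b, phiE (∑ a, q j a b))
        + phiE c₁ + phiE c₂ := by
    refine sum_phiE_mix2 c₁ c₂ _ _ _ ?_ ?_ hpswap hqswap
    · intro i b; simp [Finset.mul_sum]
    · intro j b; simp [Finset.mul_sum]
  have T3 : ∑ u, ∑ a, ∑ b, phiE (mixP c₁ c₂ p q u a b)
      = c₁ * (∑ i, ∑ a, ∑ b, phiE (p i a b)) + c₂ * (∑ j, ∑ a, ∑ b, phiE (q j a b))
        + phiE c₁ + phiE c₂ := by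
    refine sum_phiE_mix3 c₁ c₂ _ _ _ ?_ ?_ hp hq
    · intro i a b; simp
    · intro j a b; simp
  have T4 : ∑ u, phiE (∑ a, ∑ b, mixP c₁ c₂ p q u a b)
      = c₁ * (∑ i, phiE (∑ a, ∑ b, p i a b)) + c₂ * (∑ j, phiE (∑ a, ∑ b, q j a b))
        + phiE c₁ + phiE c₂ := by
    refine sum_phiE_mix1 c₁ c₂ _ _ _ ?_ ?_ hp hq
    · intro i; simp [Finset.mul_sum]
    · intro j; simp [Finset.mul_sum]
  rw [condMI_eq, condMI_eq, condMI_eq, T1, T2, T3, T4]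
  ring

end SigmaAux2

/-- For every positive integer `n`, `σ_n` is concave on `ℝ_{≥0}`: for all
`a, b ≥ 0` and `λ ∈ [0,1]`, `σ_n((1−λ)a + λb) ≥ (1−λ)σ_n(a) + λσ_n(b)`. -/
theorem sigmaN_concave
    {X1 X2 Y : Type} [Fintype X1] [Fintype X2] [Fintype Y]
    (M : MAC X1 X2 Y) (n : ℕ) (hn : 1 ≤ n)
    (a b : ℝ) (ha : 0 ≤ a) (hb : 0 ≤ b) (l : ℝ) (hl0 : 0 ≤ l) (hl1 : l ≤ 1) :
    (1 - l) * sigmaN M n a + l * sigmaN M n b ≤ sigmaN M n ((1 - l) * a + l * b) := by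
  classical
  -- Degenerate cases: an empty input alphabet makes every `sigmaSet` empty.
  rcases isEmpty_or_nonempty (Fin n → X1) with hE | hNE1
  · have hemp : ∀ δ : ℝ, sigmaSet M n δ = ∅ := by
      intro δ; ext r
      simp only [sigmaSet, Set.mem_setOf_eq, Set.mem_empty_iff_false, iff_false, not_exists]
      rintro k p ⟨⟨hnn, hs⟩, -, -⟩
      simp [Finset.univ_eq_empty] at hs
    simp [sigmaN, hemp, Real.sSup_empty]
  rcases isEmpty_or_nonempty (Fin n → X2) with hE | hNE2
  · have hemp : ∀ δ : ℝ, sigmaSet M n δ = ∅ := by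
      intro δ; ext r
      simp only [sigmaSet, Set.mem_setOf_eq, Set.mem_empty_iff_false, iff_false, not_exists]
      rintro k p ⟨⟨hnn, hs⟩, -, -⟩
      simp [Finset.univ_eq_empty] at hs
    simp [sigmaN, hemp, Real.sSup_empty]
  obtain ⟨a₀⟩ := hNE1
  obtain ⟨b₀⟩ := hNE2
  -- Channel output sums to one
  have hYsum : ∀ (x1 : Fin n → X1) (x2 : Fin n → X2),
      ∑ y : Fin n → Y, ∏ t, M.W (x1 t) (x2 t) (y t) = 1 := by
    intro x1 x2
    have h := Finset.prod_univ_sum (fun _ : Fin n => (Finset.univ : Finset Y))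
      (fun t z => M.W (x1 t) (x2 t) z)
    rw [Fintype.piFinset_univ] at h
    rw [← h]
    simp [M.sum_one]
  have houtsum : ∀ (k : ℕ) (p : Fin k → (Fin n → X1) → (Fin n → X2) → ℝ),
      (∑ u, ∑ a, ∑ b, p u a b = 1) →
      ∑ u, ∑ x : (Fin n → X1) × (Fin n → X2), ∑ y : Fin n → Y,
        p u x.1 x.2 * ∏ t, M.W (x.1 t) (x.2 t) (y t) = 1 := by
    intro k p hs
    have h1 : ∀ (u : Fin k) (x : (Fin n → X1) × (Fin n → X2)),
        ∑ y : Fin n → Y, p u x.1 x.2 * ∏ t, M.W (x.1 t) (x.2 t) (y t) = p u x.1 x.2 := by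
      intro u x
      rw [← Finset.mul_sum, hYsum, mul_one]
    simp only [h1]
    rw [← hs]
    exact Finset.sum_congr rfl fun u _ => Fintype.sum_prod_type _
  -- Boundedness of sigmaSet
  have hbdd : ∀ δ : ℝ, BddAbove (sigmaSet M n δ) := by
    intro δ
    refine ⟨(1/(n:ℝ)) * Real.logb 2 (Fintype.card ((Fin n → X1) × (Fin n → X2))), ?_⟩
    rintro r ⟨k, p, ⟨hnn, hs⟩, -, rfl⟩
    have houtnn : ∀ (u : Fin k) (x : (Fin n → X1) × (Fin n → X2)) (y : Fin n → Y),
        0 ≤ p u x.1 x.2 * ∏ t, M.W (x.1 t) (x.2 t) (y t) :=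
      fun u x y => mul_nonneg (hnn _ _ _) (Finset.prod_nonneg fun t _ => M.nonneg _ _ _)
    have hle := condMI_le_logb _ houtnn (houtsum k p hs)
    have hn' : (0:ℝ) ≤ 1/(n:ℝ) := by positivity
    exact mul_le_mul_of_nonneg_left hle hn'
  -- Point-mass pmf gives a member of each sigmaSet
  set p₀ : Fin 1 → (Fin n → X1) → (Fin n → X2) → ℝ :=
    fun _ x y => (if x = a₀ then (1:ℝ) else 0) * (if y = b₀ then (1:ℝ) else 0) with hp₀
  have e1 : ∀ (u : Fin 1) (x : Fin n → X1),
      (∑ y, p₀ u x y) = if x = a₀ then (1:ℝ) else 0 := by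
    intro u x
    rw [hp₀]
    rw [← Finset.mul_sum, Finset.sum_ite_eq']
    simp
  have e2 : ∀ (u : Fin 1) (y : Fin n → X2),
      (∑ x, p₀ u x y) = if y = b₀ then (1:ℝ) else 0 := by
    intro u y
    rw [hp₀]
    rw [← Finset.sum_mul, Finset.sum_ite_eq']
    simp
  have e4 : ∀ u : Fin 1, ∑ x, ∑ y, p₀ u x y = 1 := by
    intro u
    rw [Finset.sum_congr rfl fun x _ => e1 u x, Finset.sum_ite_eq']
    simp
  have hp₀pmf : IsPMF3 p₀ := by
    constructor
    · intro u x y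
      simp only [hp₀]
      split_ifs <;> norm_num
    · rw [Finset.sum_congr rfl fun u _ => e4 u]
      simp
  have hp₀MI : condMI p₀ = 0 := by
    rw [condMI_eq]
    have h1 : (∑ u : Fin 1, ∑ x, phiE (∑ y, p₀ u x y)) = 0 :=
      Finset.sum_eq_zero fun u _ => Finset.sum_eq_zero fun x _ => by
        rw [e1 u x]; split_ifs <;> simp
    have h2 : (∑ u : Fin 1, ∑ y, phiE (∑ x, p₀ u x y)) = 0 :=
      Finset.sum_eq_zero fun u _ => Finset.sum_eq_zero fun y _ => by
        rw [e2 u y]; split_ifs <;> simp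
    have h3 : (∑ u : Fin 1, ∑ x, ∑ y, phiE (p₀ u x y)) = 0 :=
      Finset.sum_eq_zero fun u _ => Finset.sum_eq_zero fun x _ =>
        Finset.sum_eq_zero fun y _ => by
          simp only [hp₀]; split_ifs <;> simp
    have h4 : (∑ u : Fin 1, phiE (∑ x, ∑ y, p₀ u x y)) = 0 :=
      Finset.sum_eq_zero fun u _ => by rw [e4 u]; simp
    rw [h1, h2, h3, h4]; ring
  have hmem0 : ∀ δ : ℝ, 0 ≤ δ → (sigmaSet M n δ).Nonempty := by
    intro δ hδ
    refine ⟨_, 1, p₀, hp₀pmf, ?_, rfl⟩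
    rw [hp₀MI]
    positivity
  -- Time-sharing: mixtures stay in the sigmaSet of the mixed parameter
  have hmix : ∀ ra ∈ sigmaSet M n a, ∀ rb ∈ sigmaSet M n b,
      (1-l)*ra + l*rb ∈ sigmaSet M n ((1-l)*a + l*b) := by
    rintro ra ⟨k₁, p, ⟨hpnn, hps⟩, hpMI, rfl⟩ rb ⟨k₂, q, ⟨hqnn, hqs⟩, hqMI, rfl⟩
    have houtp := houtsum k₁ p hps
    have houtq := houtsum k₂ q hqs
    refine ⟨k₁ + k₂, mixP (1-l) l p q, ⟨?_, ?_⟩, ?_, ?_⟩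
    · intro u x y
      induction u using Fin.addCases with
      | left i => rw [mixP_left]; exact mul_nonneg (by linarith) (hpnn _ _ _)
      | right j => rw [mixP_right]; exact mul_nonneg hl0 (hqnn _ _ _)
    · rw [Fin.sum_univ_add]
      simp only [mixP_left, mixP_right, ← Finset.mul_sum]
      rw [hps, hqs]
      ring
    · rw [condMI_mixP _ _ _ _ hps hqs]
      have h1 : (1-l) * condMI p ≤ (1-l) * ((n:ℝ)*a) :=
        mul_le_mul_of_nonneg_left hpMI (by linarith)
      have h2 : l * condMI q ≤ l * ((n:ℝ)*b) := mul_le_mul_of_nonneg_left hqMI hl0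
      have h3 : (n:ℝ) * ((1-l)*a + l*b) = (1-l)*((n:ℝ)*a) + l*((n:ℝ)*b) := by ring
      rw [h3]
      linarith
    · have hout : (fun (u : Fin (k₁+k₂)) (x : (Fin n → X1) × (Fin n → X2)) (y : Fin n → Y) =>
          mixP (1-l) l p q u x.1 x.2 * ∏ t, M.W (x.1 t) (x.2 t) (y t))
          = mixP (1-l) l (fun u x y => p u x.1 x.2 * ∏ t, M.W (x.1 t) (x.2 t) (y t))
                         (fun u x y => q u x.1 x.2 * ∏ t, M.W (x.1 t) (x.2 t) (y t)) := by
        funext u x y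
        induction u using Fin.addCases with
        | left i => simp only [mixP_left]; ring
        | right j => simp only [mixP_right]; ring
      rw [hout, condMI_mixP _ _ _ _ houtp houtq]
      ring
  -- Put it together via sSup arithmetic
  have hA : (sigmaSet M n a).Nonempty := hmem0 a ha
  have hB : (sigmaSet M n b).Nonempty := hmem0 b hb
  have hC := hbdd ((1-l)*a + l*b)
  simp only [sigmaN]
  set C := sSup (sigmaSet M n ((1-l)*a + l*b)) with hCdef
  have key : ∀ x ∈ sigmaSet M n a, ∀ y ∈ sigmaSet M n b, (1-l)*x + l*y ≤ C :=
    fun x hx y hy => le_csSup hC (hmix x hx y hy)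
  have step1 : ∀ x ∈ sigmaSet M n a, (1-l)*x + l * sSup (sigmaSet M n b) ≤ C := by
    intro x hx
    rcases hl0.eq_or_lt with h | h
    · obtain ⟨y₀, hy₀⟩ := hB
      have hk := key x hx y₀ hy₀
      rw [← h] at hk ⊢
      simpa using hk
    · have hsup : sSup (sigmaSet M n b) ≤ (C - (1-l)*x)/l := by
        apply csSup_le hB
        intro y hy
        rw [le_div_iff₀ h]
        have := key x hx y hy
        linarith
      have h2 := mul_le_mul_of_nonneg_left hsup (le_of_lt h)
      have h3 : l * ((C - (1-l)*x)/l) = C - (1-l)*x := by field_simp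
      linarith
  rcases (by linarith : (0:ℝ) ≤ 1 - l).eq_or_lt with h | h
  · obtain ⟨x₀, hx₀⟩ := hA
    have hk := step1 x₀ hx₀
    rw [← h] at hk ⊢
    simpa using hk
  · have hsup : sSup (sigmaSet M n a) ≤ (C - l * sSup (sigmaSet M n b))/(1-l) := by
      apply csSup_le hA
      intro x hx
      rw [le_div_iff₀ h]
      have := step1 x hx
      linarith
    have h2 := mul_le_mul_of_nonneg_left hsup (le_of_lt h)
    have h3 : (1-l) * ((C - l * sSup (sigmaSet M n b))/(1-l)) = C - l * sSup (sigmaSet M n b) := by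
      field_simp
    linarith
end

section
/- For any discrete memoryless multiple access channel, the function σ₁ is continuous on ℝ_{≥0}; in particular lim_{δ→0⁺} σ₁(δ) = σ₁(0). -/
open scoped BigOperators

/-! Writing a joint pmf `p(u, x₁, x₂)` as the mixture `s(u) r_u(x₁, x₂)`, both `I(X₁;X₂|U)` and
`I(X₁,X₂;Y|U)` become the `s`-averages of the unconditional informations of the `r_u`. So the pairs
`(I(X₁;X₂|U), I(X₁,X₂;Y|U))` fill exactly the convex hull `K` of the image of the input simplex under
`ρ ↦ (I(X₁;X₂), I(X₁,X₂;Y))`; by Carathéodory `K` is compact, and `σ₁(δ)` is the maximum of `v`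
over `(c, v) ∈ K` with `c ≤ δ`. This upper envelope of `K` is concave (time sharing), hence
continuous on `(0, ∞)`, and compactness of `K` makes it right-continuous at `0`. -/

open Set Filter Topology Real

theorem isCompact_convexHull {E : Type*} [NormedAddCommGroup E] [NormedSpace ℝ E]
    [FiniteDimensional ℝ E] {s : Set E} (hs : IsCompact s) : IsCompact (convexHull ℝ s) := by
  let combos (k : ℕ) : Set E :=
    (fun wz : (Fin k → ℝ) × (Fin k → E) => ∑ i, wz.1 i • wz.2 i) ''
      (stdSimplex ℝ (Fin k) ×ˢ univ.pi fun _ => s)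
  have hcombos : convexHull ℝ s = ⋃ k ∈ Finset.range (Module.finrank ℝ E + 2), combos k := by
    refine Subset.antisymm (fun x hx => ?_) (iUnion₂_subset fun k _ => ?_)
    · obtain ⟨ι, _, z, w, hzs, hz, hw₀, hw₁, rfl⟩ := eq_pos_convex_span_of_mem_convexHull hx
      have hcard : Fintype.card ι < Module.finrank ℝ E + 2 := by
        have := hz.card_le_finrank_succ
        have := Submodule.finrank_le (vectorSpan ℝ (range z))
        omega
      let e := (Fintype.equivFin ι).symm
      refine mem_biUnion (Finset.mem_range.2 hcard) ⟨(w ∘ e, z ∘ e), ⟨⟨fun i => (hw₀ _).le, ?_⟩,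
        fun i _ => hzs (mem_range_self _)⟩, e.sum_comp fun i => w i • z i⟩
      simpa using (e.sum_comp w).trans hw₁
    · rintro _ ⟨⟨w, z⟩, ⟨⟨hw₀, hw₁⟩, hz⟩, rfl⟩
      exact (convex_convexHull ℝ s).sum_mem (fun i _ => hw₀ i) hw₁
        fun i _ => subset_convexHull ℝ s (hz i (mem_univ i))
  rw [hcombos]
  refine (Finset.range _).isCompact_biUnion fun k _ => ?_
  exact ((isCompact_stdSimplex ℝ (Fin k)).prod (isCompact_univ_pi fun _ => hs)).image
    (by fun_prop)

noncomputable def upperEnvelope (K : Set (ℝ × ℝ)) (δ : ℝ) : ℝ := sSup {v | ∃ c ≤ δ, (c, v) ∈ K}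

section UpperEnvelope

variable {K : Set (ℝ × ℝ)}

lemma isCompact_setOf_exists_le_mem (hK : IsCompact K) (δ : ℝ) :
    IsCompact {v | ∃ c ≤ δ, (c, v) ∈ K} := by
  have : {v | ∃ c ≤ δ, (c, v) ∈ K} = Prod.snd '' (K ∩ {z | z.1 ≤ δ}) := by
    ext v
    simp only [mem_ofPred_eq, mem_image, mem_inter_iff, Prod.exists, exists_eq_right]
    exact ⟨fun ⟨c, hc, h⟩ => ⟨c, h, hc⟩, fun ⟨c, h, hc⟩ => ⟨c, hc, h⟩⟩
  rw [this]
  exact (hK.inter_right (isClosed_le continuous_fst continuous_const)).image continuous_snd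

lemma le_upperEnvelope (hK : IsCompact K) {z : ℝ × ℝ} (hz : z ∈ K) {δ : ℝ} (h : z.1 ≤ δ) :
    z.2 ≤ upperEnvelope K δ :=
  le_csSup (isCompact_setOf_exists_le_mem hK δ).bddAbove ⟨z.1, h, hz⟩

variable {v₀ : ℝ}

lemma exists_upperEnvelope_mem (hK : IsCompact K) (h₀ : (0, v₀) ∈ K) {δ : ℝ} (hδ : 0 ≤ δ) :
    ∃ c ≤ δ, (c, upperEnvelope K δ) ∈ K :=
  (isCompact_setOf_exists_le_mem hK δ).sSup_mem ⟨v₀, 0, hδ, h₀⟩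

lemma monotoneOn_upperEnvelope (hK : IsCompact K) (h₀ : (0, v₀) ∈ K) :
    MonotoneOn (upperEnvelope K) (Ici 0) := fun _ hδ _ _ hδδ' =>
  let ⟨_, hc, hcK⟩ := exists_upperEnvelope_mem hK h₀ hδ
  le_upperEnvelope hK hcK (hc.trans hδδ')

/-- Time sharing: a mixture of the optimal points at `δ₁` and `δ₂` stays in `K`. -/
lemma concaveOn_upperEnvelope (hK : IsCompact K) (hconv : Convex ℝ K) (h₀ : (0, v₀) ∈ K) :
    ConcaveOn ℝ (Ici 0) (upperEnvelope K) := by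
  refine ⟨convex_Ici 0, fun δ₁ hδ₁ δ₂ hδ₂ a b ha hb hab => ?_⟩
  obtain ⟨c₁, hc₁, h₁⟩ := exists_upperEnvelope_mem hK h₀ hδ₁
  obtain ⟨c₂, hc₂, h₂⟩ := exists_upperEnvelope_mem hK h₀ hδ₂
  refine le_upperEnvelope hK (hconv h₁ h₂ ha hb hab) ?_
  simp only [Prod.fst_add, Prod.smul_fst, smul_eq_mul]
  gcongr

lemma continuousWithinAt_Ici_upperEnvelope (hK : IsCompact K) (h₀ : (0, v₀) ∈ K) {δ₀ : ℝ}
    (hδ₀ : 0 ≤ δ₀) : ContinuousWithinAt (upperEnvelope K) (Ici δ₀) δ₀ := by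
  refine tendsto_order.2 ⟨fun a ha => ?_, fun b hb => ?_⟩
  · filter_upwards [self_mem_nhdsWithin] with δ hδ
    exact ha.trans_le (monotoneOn_upperEnvelope hK h₀ hδ₀ (hδ₀.trans hδ) hδ)
  · have hright : ∀ z ∈ K ∩ {z | b ≤ z.2}, δ₀ < z.1 := fun z ⟨hz, hbz⟩ =>
      lt_of_not_ge fun h => (hb.trans_le hbz).not_ge (le_upperEnvelope hK hz h)
    have hK' : IsCompact (K ∩ {z | b ≤ z.2}) :=
      hK.inter_right (isClosed_le continuous_const continuous_snd)
    have hnear := hK'.eventually_forall_of_forall_eventually (P := fun δ z => δ < z.1)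
      fun z hz => (isOpen_lt continuous_fst (continuous_fst.comp continuous_snd)).mem_nhds
        (hright z hz)
    filter_upwards [nhdsWithin_le_nhds hnear, self_mem_nhdsWithin] with δ hδ hδ₀δ
    obtain ⟨c, hc, hcK⟩ := exists_upperEnvelope_mem hK h₀ (hδ₀.trans hδ₀δ)
    exact lt_of_not_ge fun hbδ => (hδ _ ⟨hcK, hbδ⟩).not_ge hc

theorem continuousOn_upperEnvelope (hK : IsCompact K) (hconv : Convex ℝ K) (h₀ : (0, v₀) ∈ K) :
    ContinuousOn (upperEnvelope K) (Ici 0) :=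
  (concaveOn_upperEnvelope hK hconv h₀).continuousOn_Ici
    (continuousWithinAt_Ici_upperEnvelope hK h₀ le_rfl)

end UpperEnvelope

section Entropy

variable {α U β : Type} [Fintype α] [Fintype U] [Fintype β]

lemma ent2_eq_sum_negMulLog (p : α → ℝ) : ent2 p = (∑ a, negMulLog (p a)) / log 2 := by
  simp only [ent2, negMulLog, logb, Finset.sum_div, ← Finset.sum_neg_distrib]
  exact Finset.sum_congr rfl fun a _ => by ring

@[fun_prop]
lemma continuous_ent2 : Continuous (ent2 : (α → ℝ) → ℝ) := by
  simp_rw [funext ent2_eq_sum_negMulLog]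
  fun_prop

lemma ent2_eq_zero_of_forall_eq_zero_or_eq_one {p : α → ℝ} (h : ∀ a, p a = 0 ∨ p a = 1) :
    ent2 p = 0 := by
  rw [ent2_eq_sum_negMulLog, Finset.sum_eq_zero fun a _ => by rcases h a with h | h <;> simp [h],
    zero_div]

/-- The chain rule `H(U, B) = H(U) + H(B | U)`. -/
lemma ent2_mul_of_sum_eq_one (s : U → ℝ) (r : U → β → ℝ) (hr : ∀ u, s u ≠ 0 → ∑ b, r u b = 1) :
    ent2 (fun x : U × β => s x.1 * r x.1 x.2) = ent2 s + ∑ u, s u * ent2 (r u) := by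
  have hu : ∀ u, ∑ b, negMulLog (s u * r u b)
      = negMulLog (s u) + s u * ∑ b, negMulLog (r u b) := by
    intro u
    simp only [negMulLog_mul, Finset.sum_add_distrib, ← Finset.sum_mul, ← Finset.mul_sum]
    rcases eq_or_ne (s u) 0 with hs | hs
    · simp [hs]
    · rw [hr u hs, one_mul]
  simp only [ent2_eq_sum_negMulLog, Fintype.sum_prod_type, hu, Finset.sum_add_distrib,
    Finset.mul_sum, add_div, Finset.sum_div, mul_div_assoc]

end Entropy

section MutualInfo

variable {U A B : Type} [Fintype U] [Fintype A] [Fintype B]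

noncomputable def mutualInfo (ρ : A × B → ℝ) : ℝ :=
  ent2 (fun a => ∑ b, ρ (a, b)) + ent2 (fun b => ∑ a, ρ (a, b)) - ent2 ρ

@[fun_prop]
lemma continuous_mutualInfo : Continuous (mutualInfo : (A × B → ℝ) → ℝ) := by
  unfold mutualInfo
  fun_prop

lemma mutualInfo_single [DecidableEq A] [DecidableEq B] (x : A × B) :
    mutualInfo (Pi.single x (1 : ℝ)) = 0 := by
  have h01 : ∀ (P : Prop) [Decidable P],
      (if P then (1 : ℝ) else 0) = 0 ∨ (if P then (1 : ℝ) else 0) = 1 := by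
    intro P _; split_ifs <;> simp
  have hmarg₁ : ∀ a, ∑ b, (Pi.single x (1 : ℝ) : A × B → ℝ) (a, b) = if a = x.1 then 1 else 0 := by
    intro a
    simp [Pi.single_apply, Prod.ext_iff, ite_and]
  have hmarg₂ : ∀ b, ∑ a, (Pi.single x (1 : ℝ) : A × B → ℝ) (a, b) = if b = x.2 then 1 else 0 := by
    intro b
    simp [Pi.single_apply, Prod.ext_iff, ite_and]
  simp only [mutualInfo, hmarg₁, hmarg₂]
  rw [ent2_eq_zero_of_forall_eq_zero_or_eq_one fun _ => h01 _,
    ent2_eq_zero_of_forall_eq_zero_or_eq_one fun _ => h01 _,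
    ent2_eq_zero_of_forall_eq_zero_or_eq_one fun y => by rw [Pi.single_apply]; exact h01 _]
  norm_num

lemma condMI_eq_sum_mul_mutualInfo (p : U → A → B → ℝ) (s : U → ℝ) (r : U → A × B → ℝ)
    (hp : ∀ u a b, p u a b = s u * r u (a, b)) (hr : ∀ u, s u ≠ 0 → ∑ x, r u x = 1) :
    condMI p = ∑ u, s u * mutualInfo (r u) := by
  have hr' : ∀ u, s u ≠ 0 → ∑ a, ∑ b, r u (a, b) = 1 := fun u hu => by
    rw [← Fintype.sum_prod_type']; exact hr u hu
  have hU : (fun u => ∑ a, ∑ b, p u a b) = s := by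
    funext u
    simp only [hp, ← Finset.mul_sum]
    rcases eq_or_ne (s u) 0 with hs | hs
    · simp [hs]
    · rw [hr' u hs, mul_one]
  have hUA : ent2 (fun x : U × A => ∑ b, p x.1 x.2 b)
      = ent2 s + ∑ u, s u * ent2 (fun a => ∑ b, r u (a, b)) := by
    simp only [hp, ← Finset.mul_sum]
    exact ent2_mul_of_sum_eq_one s _ hr'
  have hUB : ent2 (fun x : U × B => ∑ a, p x.1 a x.2)
      = ent2 s + ∑ u, s u * ent2 (fun b => ∑ a, r u (a, b)) := by
    simp only [hp, ← Finset.mul_sum]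
    exact ent2_mul_of_sum_eq_one s _ fun u hu => by rw [Finset.sum_comm]; exact hr' u hu
  have hUAB : ent2 (fun x : U × A × B => p x.1 x.2.1 x.2.2)
      = ent2 s + ∑ u, s u * ent2 (r u) := by
    simp only [hp]
    exact ent2_mul_of_sum_eq_one s r hr
  simp only [condMI, hU, hUA, hUB, hUAB, mutualInfo, mul_add, mul_sub, Finset.sum_add_distrib,
    Finset.sum_sub_distrib]
  ring

end MutualInfo

section Region

variable {A B C : Type} [Fintype A] [Fintype B] [Fintype C] (N : A × B → C → ℝ)

/-- `(I(X₁;X₂), I(X₁,X₂;Y))` when the input pmf `ρ` is sent through the channel `N`. -/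
noncomputable def miPair (ρ : A × B → ℝ) : ℝ × ℝ :=
  (mutualInfo ρ, mutualInfo fun z : (A × B) × C => ρ z.1 * N z.1 z.2)

noncomputable def miRegion : Set (ℝ × ℝ) := convexHull ℝ (miPair N '' stdSimplex ℝ (A × B))

lemma isCompact_miRegion : IsCompact (miRegion N) :=
  isCompact_convexHull ((isCompact_stdSimplex ℝ _).image (by unfold miPair; fun_prop))

variable {N}

lemma condMI_pair_eq_sum_smul (hN : ∀ x, ∑ c, N x c = 1) {U : Type} [Fintype U]
    (p : U → A → B → ℝ) (s : U → ℝ) (r : U → A × B → ℝ)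
    (hp : ∀ u a b, p u a b = s u * r u (a, b)) (hr : ∀ u, s u ≠ 0 → ∑ x, r u x = 1) :
    (condMI p, condMI fun u (x : A × B) c => p u x.1 x.2 * N x c)
      = ∑ u, s u • miPair N (r u) := by
  have hchan := condMI_eq_sum_mul_mutualInfo (fun u (x : A × B) c => p u x.1 x.2 * N x c) s
    (fun u z => r u z.1 * N z.1 z.2) (fun u x c => by rw [hp, mul_assoc]) fun u hu => by
      rw [Fintype.sum_prod_type]; simp only [← Finset.mul_sum, hN, mul_one]; exact hr u hu
  ext
  · simp [Prod.fst_sum, condMI_eq_sum_mul_mutualInfo p s r hp hr, miPair]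
  · simp [Prod.snd_sum, hchan, miPair]

lemma condMI_pair_mem_miRegion [Nonempty (A × B)] (hN : ∀ x, ∑ c, N x c = 1) {U : Type}
    [Fintype U] {p : U → A → B → ℝ} (hp : IsPMF3 p) :
    (condMI p, condMI fun u (x : A × B) c => p u x.1 x.2 * N x c) ∈ miRegion N := by
  classical
  obtain ⟨x₀⟩ := ‹Nonempty (A × B)›
  set s : U → ℝ := fun u => ∑ x : A × B, p u x.1 x.2
  -- the conditional pmf of `(X₁, X₂)` given `u`; where `s u = 0` any pmf will do
  set r : U → A × B → ℝ := fun u => if s u = 0 then Pi.single x₀ 1 else fun x => p u x.1 x.2 / s u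
  have hs : s ∈ stdSimplex ℝ U :=
    ⟨fun u => Finset.sum_nonneg fun x _ => hp.1 _ _ _, by simpa [s, Fintype.sum_prod_type] using hp.2⟩
  have hr : ∀ u, r u ∈ stdSimplex ℝ (A × B) := by
    intro u
    by_cases hsu : s u = 0
    · simpa [r, hsu] using single_mem_stdSimplex ℝ x₀
    · simp only [r, hsu, if_false]
      exact ⟨fun x => div_nonneg (hp.1 _ _ _) (hs.1 u), by rw [← Finset.sum_div, div_self hsu]⟩
  have hpr : ∀ u a b, p u a b = s u * r u (a, b) := by
    intro u a b
    by_cases hsu : s u = 0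
    · have hle : p u a b ≤ s u :=
        Finset.single_le_sum (f := fun x : A × B => p u x.1 x.2) (fun x _ => hp.1 _ _ _)
          (Finset.mem_univ (a, b))
      simp only [hsu, zero_mul]
      exact le_antisymm (hsu ▸ hle) (hp.1 u a b)
    · simp only [r, hsu, if_false]
      rw [mul_div_cancel₀ _ hsu]
  exact mem_convexHull_of_exists_fintype s (fun u => miPair N (r u)) hs.1 hs.2
    (fun u => mem_image_of_mem _ (hr u))
    (condMI_pair_eq_sum_smul hN p s r hpr fun u _ => (hr u).2).symm

lemma exists_isPMF3_of_mem_miRegion (hN : ∀ x, ∑ c, N x c = 1) {z : ℝ × ℝ}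
    (hz : z ∈ miRegion N) :
    ∃ (k : ℕ) (p : Fin k → A → B → ℝ), IsPMF3 p ∧ condMI p = z.1 ∧
      condMI (fun u (x : A × B) c => p u x.1 x.2 * N x c) = z.2 := by
  obtain ⟨ι, _, w, z', hw₀, hw₁, hz', rfl⟩ := mem_convexHull_iff_exists_fintype.1 hz
  choose ρ hρ hρz using hz'
  let e := (Fintype.equivFin ι).symm
  let p : Fin (Fintype.card ι) → A → B → ℝ := fun u a b => w (e u) * ρ (e u) (a, b)
  have hp : IsPMF3 p := by
    refine ⟨fun u a b => mul_nonneg (hw₀ _) ((hρ _).1 _), ?_⟩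
    simp only [p, ← Finset.mul_sum, ← Fintype.sum_prod_type', (hρ _).2, mul_one]
    rw [e.sum_comp w, hw₁]
  have hpair := condMI_pair_eq_sum_smul hN p (fun u => w (e u)) (fun u => ρ (e u))
    (fun _ _ _ => rfl) fun u _ => (hρ _).2
  rw [e.sum_comp (fun i => w i • miPair N (ρ i))] at hpair
  simp only [hρz] at hpair
  exact ⟨_, p, hp, congrArg Prod.fst hpair, congrArg Prod.snd hpair⟩

lemma setOf_condMI_eq_setOf_mem_miRegion [Nonempty (A × B)] (hN : ∀ x, ∑ c, N x c = 1)
    (δ : ℝ) :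
    {v | ∃ (k : ℕ) (p : Fin k → A → B → ℝ), IsPMF3 p ∧ condMI p ≤ δ ∧
        v = condMI fun u (x : A × B) c => p u x.1 x.2 * N x c}
      = {v | ∃ c ≤ δ, (c, v) ∈ miRegion N} := by
  ext v
  constructor
  · rintro ⟨k, p, hp, hδ, rfl⟩
    exact ⟨_, hδ, condMI_pair_mem_miRegion hN hp⟩
  · rintro ⟨c, hδ, hcv⟩
    obtain ⟨k, p, hp, rfl, hv⟩ := exists_isPMF3_of_mem_miRegion hN hcv
    exact ⟨k, p, hp, hδ, hv.symm⟩

theorem continuousOn_sSup_condMI (hN : ∀ x, ∑ c, N x c = 1) :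
    ContinuousOn (fun δ : ℝ => sSup {v | ∃ (k : ℕ) (p : Fin k → A → B → ℝ), IsPMF3 p ∧
      condMI p ≤ δ ∧ v = condMI fun u (x : A × B) c => p u x.1 x.2 * N x c}) (Ici 0) := by
  classical
  rcases isEmpty_or_nonempty (A × B) with hAB | hAB
  · have hempty : ∀ {k : ℕ} (p : Fin k → A → B → ℝ), ¬ IsPMF3 p := fun p hp => by
      simpa [← Fintype.sum_prod_type'] using hp.2
    simp only [hempty, false_and, exists_const, ofPred_false, Real.sSup_empty]
    exact continuousOn_const
  · simp only [setOf_condMI_eq_setOf_mem_miRegion hN]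
    obtain ⟨x₀⟩ := hAB
    refine continuousOn_upperEnvelope (isCompact_miRegion N) (convex_convexHull ℝ _)
      (v₀ := (miPair N (Pi.single x₀ 1)).2) (subset_convexHull ℝ _ ?_)
    exact ⟨_, single_mem_stdSimplex ℝ x₀, by simp [miPair, mutualInfo_single]⟩

end Region

lemma MAC.sum_prod_W_eq_one {X1 X2 Y : Type} [Fintype X1] [Fintype X2] [Fintype Y]
    (M : MAC X1 X2 Y) {n : ℕ} (x : (Fin n → X1) × (Fin n → X2)) :
    ∑ y : Fin n → Y, ∏ t, M.W (x.1 t) (x.2 t) (y t) = 1 := by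
  rw [← Fintype.prod_sum]
  simp [M.sum_one]

/-- `σ₁` is continuous on `ℝ_{≥0}`; in particular it is continuous
at `δ = 0` (from within `ℝ_{≥0}`). -/
theorem sigmaOne_continuousOn
    {X1 X2 Y : Type} [Fintype X1] [Fintype X2] [Fintype Y]
    (M : MAC X1 X2 Y) :
    ContinuousOn (fun δ : ℝ => sigmaN M 1 δ) (Set.Ici 0) := by
  refine (continuousOn_sSup_condMI (M.sum_prod_W_eq_one (n := 1))).congr fun δ _ => ?_
  simp only [sigmaN, sigmaSet, Nat.cast_one, one_mul, div_one]
end
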